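/- Let d₁, d₂ be real numbers with 2 ≤ d₁ < d₂, and let r₋, r₊ be as defined. Then the interval integral from r₋ to r₊ of (1/π)·(d₁d₂/(d₁+d₂))·x·sqrt((x²−r₋²)·(r₊²−x²)) / (d₁d₂−x²) dx equals d₁d₂/(d₁+d₂). Equivalently, the second moment of the limiting spectral density (even in x, supported on r₋ ≤ |x| ≤ r₊ plus an atom at 0) equals the average degree 2d₁d₂/(d₁+d₂). -/

import Mathlib

/-!
The substitution `t = x² - (d₁ + d₂ - 2)` turns the integral into half of
`∫_{-D}^{D} √(D² - t²) / (k - t) dt` with `k = d₁d₂ - (d₁ + d₂ - 2) = (d₁ - 1)(d₂ - 1) + 1`.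
This Stieltjes transform of the semicircle equals `π (k - √(k² - D²))`, and since
`D² = 4 (d₁ - 1)(d₂ - 1)` we get `k² - D² = ((d₁ - 1)(d₂ - 1) - 1)²`, so the integral is `π`.
The semicircle integral is computed from an explicit primitive, found by splitting
`√(r² - t²) / (k - t) = (k + t) / √(r² - t²) - (k² - r²) / ((k - t) √(r² - t²))`.
-/

open Real Set intervalIntegral

theorem HasDerivAt.arcsin_of_sq_lt_one {f : ℝ → ℝ} {f' x : ℝ} (hf : HasDerivAt f f' x)
    (h : f x ^ 2 < 1) : HasDerivAt (fun y => arcsin (f y)) (f' / √(1 - f x ^ 2)) x := by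
  obtain ⟨h₁, h₂⟩ := abs_lt.mp (sq_lt_one_iff_abs_lt_one _ |>.mp h)
  exact ((hasDerivAt_arcsin h₁.ne' h₂.ne).comp x hf).congr_deriv (by ring)

noncomputable def semicircleStieltjesPrimitive (r k t : ℝ) : ℝ :=
  k * arcsin (t / r) - √(r ^ 2 - t ^ 2)
    + √(k ^ 2 - r ^ 2) * arcsin ((r ^ 2 - k * t) / (r * (k - t)))

section
variable {r k : ℝ}

theorem hasDerivAt_semicircleStieltjesPrimitive (hr : 0 < r) (hrk : r < k) {t : ℝ}
    (ht : t ∈ Ioo (-r) r) :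
    HasDerivAt (semicircleStieltjesPrimitive r k) (√(r ^ 2 - t ^ 2) / (k - t)) t := by
  obtain ⟨htl, htr⟩ := ht
  have hS : 0 < r ^ 2 - t ^ 2 := by nlinarith
  have hkt : 0 < k - t := by linarith
  set S := √(r ^ 2 - t ^ 2)
  set q := √(k ^ 2 - r ^ 2)
  have hS2 : S ^ 2 = r ^ 2 - t ^ 2 := sq_sqrt hS.le
  have hq2 : q ^ 2 = k ^ 2 - r ^ 2 := sq_sqrt (by nlinarith)
  have hSpos : 0 < S := sqrt_pos.mpr hS
  have hq : 0 < q := sqrt_pos.mpr (by nlinarith)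
  have hsqrt₁ : √(1 - (t / r) ^ 2) = S / r := by
    rw [show 1 - (t / r) ^ 2 = (S / r) ^ 2 by field_simp; linarith, sqrt_sq (by positivity)]
  have hsqrt₂ : √(1 - ((r ^ 2 - k * t) / (r * (k - t))) ^ 2) = q * S / (r * (k - t)) := by
    rw [show 1 - ((r ^ 2 - k * t) / (r * (k - t))) ^ 2 = (q * S / (r * (k - t))) ^ 2 by
      field_simp; rw [hS2, hq2]; ring, sqrt_sq (by positivity)]
  have hasin₁ : HasDerivAt (fun y => arcsin (y / r)) (1 / S) t := by
    refine ((hasDerivAt_id' t).div_const r).arcsin_of_sq_lt_one ?_ |>.congr_deriv ?_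
    · rw [div_pow, div_lt_one (by positivity)]; nlinarith
    · rw [hsqrt₁]; field_simp
  have hw : HasDerivAt (fun y => (r ^ 2 - k * y) / (r * (k - y)))
      ((r ^ 2 - k ^ 2) / (r * (k - t) ^ 2)) t := by
    refine (((hasDerivAt_id' t).const_mul k).const_sub (r ^ 2)).fun_div
      (((hasDerivAt_id' t).const_sub k).const_mul r) (by positivity) |>.congr_deriv ?_
    field_simp; ring
  have hasin₂ : HasDerivAt (fun y => arcsin ((r ^ 2 - k * y) / (r * (k - y))))
      (-q / ((k - t) * S)) t := by
    refine hw.arcsin_of_sq_lt_one ?_ |>.congr_deriv ?_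
    · rw [← sub_pos, ← sqrt_pos, hsqrt₂]; positivity
    · rw [hsqrt₂]; field_simp; rw [hq2]; ring
  have hsqrt : HasDerivAt (fun y => √(r ^ 2 - y ^ 2)) (-t / S) t := by
    refine ((hasDerivAt_pow 2 t).const_sub (r ^ 2)).sqrt hS.ne' |>.congr_deriv ?_
    field_simp; ring
  refine ((hasin₁.const_mul k).sub hsqrt).add (hasin₂.const_mul q) |>.congr_deriv ?_
  field_simp
  rw [hq2]
  linear_combination (-1 : ℝ) * hS2

theorem continuousOn_semicircleStieltjesPrimitive (hr : 0 < r) (hrk : r < k) :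
    ContinuousOn (semicircleStieltjesPrimitive r k) (Icc (-r) r) := by
  have hw : ContinuousOn (fun t => (r ^ 2 - k * t) / (r * (k - t))) (Icc (-r) r) :=
    ContinuousOn.div (by fun_prop) (by fun_prop) fun t ht =>
      mul_ne_zero hr.ne' (by linarith [ht.2])
  refine ContinuousOn.add (ContinuousOn.sub ?_ ?_) (continuousOn_const.mul ?_)
  · exact (continuous_const.mul (continuous_arcsin.comp (continuous_id.div_const r))).continuousOn
  · exact (by fun_prop : Continuous fun t => √(r ^ 2 - t ^ 2)).continuousOn
  · exact continuous_arcsin.comp_continuousOn hw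

theorem semicircleStieltjesPrimitive_sub (hr : 0 < r) (hrk : r < k) :
    semicircleStieltjesPrimitive r k r - semicircleStieltjesPrimitive r k (-r)
      = π * (k - √(k ^ 2 - r ^ 2)) := by
  have hr' : r ≠ 0 := hr.ne'
  have hk : k - r ≠ 0 := by linarith
  have hk' : k - -r ≠ 0 := by linarith
  have hw₁ : (r ^ 2 - k * r) / (r * (k - r)) = -1 := by field_simp; ring
  have hw₂ : (r ^ 2 - k * -r) / (r * (k - -r)) = 1 := by
    rw [div_eq_one_iff_eq (mul_ne_zero hr' hk')]; ring
  simp only [semicircleStieltjesPrimitive, hw₁, hw₂, div_self hr', neg_div, arcsin_one,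
    arcsin_neg, sub_self, neg_sq, sqrt_zero]
  ring

theorem integral_sqrt_sq_sub_sq_div_sub (hr : 0 < r) (hrk : r < k) :
    ∫ t in -r..r, √(r ^ 2 - t ^ 2) / (k - t) = π * (k - √(k ^ 2 - r ^ 2)) := by
  have hint :
      IntervalIntegrable (fun t => √(r ^ 2 - t ^ 2) / (k - t)) MeasureTheory.volume (-r) r := by
    refine ContinuousOn.intervalIntegrable ?_
    rw [uIcc_of_le (by linarith)]
    exact ContinuousOn.div (by fun_prop) (by fun_prop) fun t ht => by linarith [ht.2]
  rw [integral_eq_sub_of_hasDerivAt_of_le (by linarith)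
    (continuousOn_semicircleStieltjesPrimitive hr hrk)
    (fun t ht => hasDerivAt_semicircleStieltjesPrimitive hr hrk ht) hint,
    semicircleStieltjesPrimitive_sub hr hrk]

end

theorem integral_mul_comp_sq_sub {g : ℝ → ℝ} {m a b : ℝ} (ha : 0 ≤ a) (hab : a ≤ b)
    (hg : ContinuousOn g (Icc (a ^ 2 - m) (b ^ 2 - m))) :
    ∫ x in a..b, x * g (x ^ 2 - m) = 1 / 2 * ∫ t in a ^ 2 - m..b ^ 2 - m, g t := by
  have hderiv : ∀ x ∈ uIcc a b, HasDerivAt (fun y => y ^ 2 - m) (2 * x) x := fun x _ => by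
    simpa using (hasDerivAt_pow 2 x).sub_const m
  have himage : (fun y => y ^ 2 - m) '' uIcc a b ⊆ Icc (a ^ 2 - m) (b ^ 2 - m) := by
    rintro _ ⟨x, hx, rfl⟩
    rw [uIcc_of_le hab] at hx
    constructor <;> nlinarith [hx.1, hx.2]
  rw [← integral_comp_mul_deriv' hderiv (by fun_prop) (hg.mono himage), ← integral_const_mul]
  congr 1 with x
  simp only [Function.comp]
  ring

theorem integral_mul_sqrt_div_sub_sq {a b c : ℝ} (ha : 0 ≤ a) (hab : a < b) (hbc : b < c) :
    ∫ x in √a..√b, x * √((x ^ 2 - a) * (b - x ^ 2)) / (c - x ^ 2)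
      = π / 2 * (c - (a + b) / 2 - √((c - a) * (c - b))) := by
  set m := (a + b) / 2
  set r := (b - a) / 2
  have hr : 0 < r := by simp only [r]; linarith
  have hrk : r < c - m := by simp only [r, m]; linarith
  have hg : ContinuousOn (fun t => √(r ^ 2 - t ^ 2) / (c - m - t)) (Icc (-r) r) :=
    ContinuousOn.div (by fun_prop) (by fun_prop) fun t ht => by linarith [ht.2]
  have hbounds : (√a ^ 2 - m = -r) ∧ (√b ^ 2 - m = r) := by
    rw [sq_sqrt ha, sq_sqrt (by linarith)]; constructor <;> ring
  calc ∫ x in √a..√b, x * √((x ^ 2 - a) * (b - x ^ 2)) / (c - x ^ 2)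
      = ∫ x in √a..√b, x * (√(r ^ 2 - (x ^ 2 - m) ^ 2) / (c - m - (x ^ 2 - m))) := by
        congr 1 with x
        rw [mul_div_assoc, show (x ^ 2 - a) * (b - x ^ 2) = r ^ 2 - (x ^ 2 - m) ^ 2 by ring,
          show c - x ^ 2 = c - m - (x ^ 2 - m) by ring]
    _ = 1 / 2 * ∫ t in -r..r, √(r ^ 2 - t ^ 2) / (c - m - t) := by
        rw [integral_mul_comp_sq_sub (g := fun t => √(r ^ 2 - t ^ 2) / (c - m - t))
          (sqrt_nonneg a) (sqrt_le_sqrt hab.le) (by rwa [hbounds.1, hbounds.2]),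
          hbounds.1, hbounds.2]
    _ = π / 2 * (c - (a + b) / 2 - √((c - a) * (c - b))) := by
        rw [integral_sqrt_sq_sub_sq_div_sub hr hrk,
          show (c - m) ^ 2 - r ^ 2 = (c - a) * (c - b) by ring]
        ring

theorem rsrb_density_second_moment (d₁ d₂ : ℝ) (hd₁ : 2 ≤ d₁) (hd₁₂ : d₁ < d₂)
    (D rm rp : ℝ)
    (hD : D = Real.sqrt ((d₁ + d₂ - 2) ^ 2 - (d₂ - d₁) ^ 2))
    (hrp : rp = Real.sqrt (d₁ + d₂ - 2 + D))
    (hrm : rm = Real.sqrt (d₁ + d₂ - 2 - D)) :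
    ∫ x in rm..rp,
        (1 / Real.pi) * (d₁ * d₂ / (d₁ + d₂)) * x *
          Real.sqrt ((x ^ 2 - rm ^ 2) * (rp ^ 2 - x ^ 2)) / (d₁ * d₂ - x ^ 2)
      = d₁ * d₂ / (d₁ + d₂) := by
  set p := (d₁ - 1) * (d₂ - 1)
  have hp : 1 < p := by nlinarith
  have hD2 : D ^ 2 = 4 * p := by
    rw [hD, sq_sqrt (by nlinarith)]; ring
  have hD0 : 0 < D := by rw [hD]; exact sqrt_pos.mpr (by nlinarith)
  -- `(p + 1)² - D² = (p - 1)²` with `p > 1` puts the pole `d₁ d₂` beyond `rp²`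
  have hDp : D < p + 1 := by nlinarith
  have hrm2 : rm ^ 2 = d₁ + d₂ - 2 - D := by rw [hrm, sq_sqrt (by nlinarith)]
  have hrp2 : rp ^ 2 = d₁ + d₂ - 2 + D := by rw [hrp, sq_sqrt (by nlinarith)]
  have hroot : √((d₁ * d₂ - (d₁ + d₂ - 2 - D)) * (d₁ * d₂ - (d₁ + d₂ - 2 + D))) = p - 1 := by
    rw [show (d₁ * d₂ - (d₁ + d₂ - 2 - D)) * (d₁ * d₂ - (d₁ + d₂ - 2 + D)) = (p - 1) ^ 2 by
      linear_combination (-1 : ℝ) * hD2, sqrt_sq (by linarith)]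
  have hintegrand : ∀ x, 1 / π * (d₁ * d₂ / (d₁ + d₂)) * x *
      √((x ^ 2 - rm ^ 2) * (rp ^ 2 - x ^ 2)) / (d₁ * d₂ - x ^ 2)
      = 1 / π * (d₁ * d₂ / (d₁ + d₂)) * (x *
        √((x ^ 2 - (d₁ + d₂ - 2 - D)) * (d₁ + d₂ - 2 + D - x ^ 2)) / (d₁ * d₂ - x ^ 2)) :=
    fun x => by rw [hrm2, hrp2]; ring
  simp_rw [hintegrand]
  rw [integral_const_mul, hrm, hrp,
    integral_mul_sqrt_div_sub_sq (by nlinarith) (by linarith) (by linarith), hroot]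
  field_simp
  ring
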